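/- (Pointwise identity underlying Proposition 4.) Let ν > 0, μ ∈ ℝ^p, Σ positive definite and partitioned conformably with x = (x1,x2), p1 + p2 = p, and let r ∈ ℝ satisfy ν + p1 + 2r > 0. Fix x1 ∈ ℝ^{p1} and set δ1 = (x1−μ1)ᵀΣ11⁻¹(x1−μ1), μ_{2.1} = μ2 + Σ21Σ11⁻¹(x1−μ1), Σ_{22.1} = Σ22 − Σ21Σ11⁻¹Σ12, Σ̃_{22.1} = ((ν+δ1)/(ν+p1))Σ_{22.1} and Σ̃*_{22.1} = ((ν+δ1)/(ν+2r+p1))Σ_{22.1}. Then for every x2 ∈ ℝ^{p2}, ((ν+p)/(ν+δ(x)))^r · t_{p2}(x2|μ_{2.1}, Σ̃_{22.1}, ν+p1) = (d_p(p1,ν,r)/(ν+δ1)^r) · t_{p2}(x2|μ_{2.1}, Σ̃*_{22.1}, ν+p1+2r), where δ(x) = (x−μ)ᵀΣ⁻¹(x−μ) and d_p(p1,ν,r) = (ν+p)^r · Γ((p+ν)/2)Γ((p1+ν+2r)/2)/(Γ((p1+ν)/2)Γ((p+ν+2r)/2)). -/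

import Mathlib

open MeasureTheory Matrix Real Filter

/-- Squared Mahalanobis distance δ(x) = (x−μ)ᵀ S⁻¹ (x−μ). -/
noncomputable def mahalanobis {n : Type*} [Fintype n] [DecidableEq n]
    (μ : n → ℝ) (S : Matrix n n ℝ) (x : n → ℝ) : ℝ :=
  (x - μ) ⬝ᵥ (S⁻¹ *ᵥ (x - μ))

/-- The multivariate Student's-t density t_p(x|μ,S,ν). -/
noncomputable def tPdf {n : Type*} [Fintype n] [DecidableEq n]
    (μ : n → ℝ) (S : Matrix n n ℝ) (ν : ℝ) (x : n → ℝ) : ℝ :=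
  Real.Gamma (((Fintype.card n : ℝ) + ν) / 2) /
      (Real.Gamma (ν / 2) * Real.pi ^ ((Fintype.card n : ℝ) / 2) *
        ν ^ ((Fintype.card n : ℝ) / 2)) *
    S.det ^ (-(1 : ℝ) / 2) *
    (1 + mahalanobis μ S x / ν) ^ (-(((Fintype.card n : ℝ) + ν) / 2))

/-- The multivariate normal density φ_p(x|μ,S). -/
noncomputable def normalPdf {n : Type*} [Fintype n] [DecidableEq n]
    (μ : n → ℝ) (S : Matrix n n ℝ) (x : n → ℝ) : ℝ :=
  (2 * Real.pi) ^ (-(Fintype.card n : ℝ) / 2) * S.det ^ (-(1 : ℝ) / 2) *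
    Real.exp (-(mahalanobis μ S x) / 2)

/-- The Gamma(a,b) density h(u|a,b) (for u > 0). -/
noncomputable def gammaPdf (a b u : ℝ) : ℝ :=
  b ^ a / Real.Gamma a * u ^ (a - 1) * Real.exp (-(b * u))

/-- Standard normal pdf. -/
noncomputable def stdNormalPdf (x : ℝ) : ℝ :=
  (Real.sqrt (2 * Real.pi))⁻¹ * Real.exp (-(x ^ 2) / 2)

/-- Standard normal cdf. -/
noncomputable def stdNormalCdf (x : ℝ) : ℝ :=
  ∫ t in Set.Iic x, stdNormalPdf t

/-- Univariate Student's-t density with location c, scale s², κ degrees of freedom. -/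
noncomputable def tPdf1 (c s2 κ y : ℝ) : ℝ :=
  Real.Gamma ((1 + κ) / 2) /
      (Real.Gamma (κ / 2) * Real.sqrt (Real.pi * κ) * Real.sqrt s2) *
    (1 + (y - c) ^ 2 / (κ * s2)) ^ (-((1 + κ) / 2))

/-! Completing the square in the block quadratic form splits `δ(x) = δ₁ + δ₂.₁(x₂)`, where
`δ₂.₁` is the Mahalanobis distance of `x₂` from `μ₂.₁` with respect to `Σ₂₂.₁`. For a scale matrix
`(a / k) • Σ₂₂.₁` the `t`-density with `k` degrees of freedom depends on `x₂` only through
`(1 + δ₂.₁ / a) ^ (-(p₂ + k) / 2)`, the factor `k ^ (p₂ / 2)` cancelling against the determinant.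
With `a = ν + δ₁`, raising `k` from `ν + p₁` to `ν + p₁ + 2r` therefore multiplies this kernel by
`(1 + δ₂.₁ / a) ^ (-r) = (a / (ν + δ(x))) ^ r`, which is the tilting factor up to the constant
`((ν + p) / a) ^ r`; the Gamma functions make up the ratio of normalising constants. -/

namespace Matrix

section Blocks

variable {m n R : Type*} [CommRing R] [PartialOrder R] [StarRing R]

theorem PosDef.of_fromBlocks₁₁ {A : Matrix m m R} {B : Matrix m n R} {C : Matrix n m R}
    {D : Matrix n n R} (h : (fromBlocks A B C D).PosDef) : A.PosDef :=
  h.submatrix Sum.inl_injective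

theorem PosDef.fromBlocks₂₁_eq_conjTranspose {A : Matrix m m R} {B : Matrix m n R}
    {C : Matrix n m R} {D : Matrix n n R} (h : (fromBlocks A B C D).PosDef) : C = Bᴴ :=
  (isHermitian_fromBlocks_iff.mp h.isHermitian).2.1.symm

theorem PosDef.schur_complement₁₁ [Fintype m] [Fintype n] [DecidableEq m] [StarOrderedRing R]
    {A : Matrix m m R} {B : Matrix m n R} {D : Matrix n n R} [Invertible A]
    (h : (fromBlocks A B Bᴴ D).PosDef) : (D - Bᴴ * A⁻¹ * B).PosDef := by
  have hA := h.of_fromBlocks₁₁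
  refine .of_dotProduct_mulVec_pos ((IsHermitian.fromBlocks₁₁ B D hA.1).mp h.1) fun y hy => ?_
  have hv : -((A⁻¹ * B) *ᵥ y) ⊕ᵥ y ≠ 0 := fun h0 => hy (funext fun i => congrFun h0 (Sum.inr i))
  have := h.dotProduct_mulVec_pos hv
  rwa [dotProduct_mulVec, schur_complement_eq₁₁ B D _ _ hA.1, neg_add_cancel, star_zero,
    zero_vecMul, zero_dotProduct, zero_add, ← dotProduct_mulVec] at this

end Blocks

theorem dotProduct_inv_mulVec_mulVec {n R : Type*} [Fintype n] [DecidableEq n] [CommRing R]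
    {M : Matrix n n R} (hM : IsUnit M.det) (v : n → R) :
    (M *ᵥ v) ⬝ᵥ (M⁻¹ *ᵥ (M *ᵥ v)) = v ⬝ᵥ (M *ᵥ v) := by
  rw [mulVec_mulVec, nonsing_inv_mul M hM, one_mulVec, dotProduct_comm]

end Matrix

section Mahalanobis

variable {m n : Type*} [Fintype m] [Fintype n] [DecidableEq m] [DecidableEq n]

theorem mahalanobis_nonneg (μ : n → ℝ) {S : Matrix n n ℝ} (hS : S.PosDef) (x : n → ℝ) :
    0 ≤ mahalanobis μ S x := by
  simpa only [mahalanobis, star_trivial] using hS.inv.posSemidef.dotProduct_mulVec_nonneg (x - μ)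

theorem mahalanobis_smul (μ : n → ℝ) {S : Matrix n n ℝ} (hS : IsUnit S.det) {c : ℝ} (hc : c ≠ 0)
    (x : n → ℝ) : mahalanobis μ (c • S) x = c⁻¹ * mahalanobis μ S x := by
  have := invertibleOfNonzero hc
  rw [mahalanobis, mahalanobis, Matrix.inv_smul (A := S) c hS, invOf_eq_inv, smul_mulVec,
    dotProduct_smul, smul_eq_mul]

/- `z ⊕ᵥ y` solves `M (z ⊕ᵥ y) = x - μ` by block elimination, so the quadratic form of `M⁻¹` at
`x - μ` is that of `M` at `z ⊕ᵥ y`, which `schur_complement_eq₁₁` splits. -/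
theorem mahalanobis_fromBlocks {A : Matrix m m ℝ} [Invertible A] (B : Matrix m n ℝ)
    (D : Matrix n n ℝ) (hA : A.IsHermitian) (hC : IsUnit (D - Bᴴ * A⁻¹ * B).det)
    (μ₁ x₁ : m → ℝ) (μ₂ x₂ : n → ℝ) :
    mahalanobis (μ₁ ⊕ᵥ μ₂) (fromBlocks A B Bᴴ D) (x₁ ⊕ᵥ x₂) =
      mahalanobis μ₁ A x₁ +
        mahalanobis (μ₂ + Bᴴ *ᵥ (A⁻¹ *ᵥ (x₁ - μ₁))) (D - Bᴴ * A⁻¹ * B) x₂ := by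
  set C := D - Bᴴ * A⁻¹ * B
  set u₁ := x₁ - μ₁
  set w := x₂ - μ₂ - Bᴴ *ᵥ (A⁻¹ *ᵥ u₁)
  set y := C⁻¹ *ᵥ w
  set z := A⁻¹ *ᵥ (u₁ - B *ᵥ y)
  have hCy : C *ᵥ y = w := by
    rw [mulVec_mulVec, mul_nonsing_inv C hC, one_mulVec]
  have hz : z + (A⁻¹ * B) *ᵥ y = A⁻¹ *ᵥ u₁ := by
    rw [← mulVec_mulVec, ← mulVec_add, sub_add_cancel]
  have hsolve : fromBlocks A B Bᴴ D *ᵥ (z ⊕ᵥ y) = (x₁ ⊕ᵥ x₂) - (μ₁ ⊕ᵥ μ₂) := by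
    have hDy : D *ᵥ y = w + (Bᴴ * A⁻¹ * B) *ᵥ y := by rw [← hCy, ← add_mulVec, sub_add_cancel]
    rw [fromBlocks_mulVec, Sum.elim_comp_inl, Sum.elim_comp_inr, ← Sum.elim_sub_sub,
      Sum.elim_eq_iff, hDy]
    constructor
    · rw [mulVec_mulVec, mul_inv_of_invertible, one_mulVec, sub_add_cancel]
    · simp only [z, w, mulVec_sub, mulVec_mulVec, Matrix.mul_assoc]
      abel
  have hM : IsUnit (fromBlocks A B Bᴴ D).det := by
    rw [det_fromBlocks₁₁, invOf_eq_nonsing_inv]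
    exact (isUnit_det_of_invertible A).mul hC
  have hQ := schur_complement_eq₁₁ B D z y hA
  simp only [star_trivial, ← dotProduct_mulVec, hz] at hQ
  rw [mahalanobis, mahalanobis, mahalanobis, ← hsolve, dotProduct_inv_mulVec_mulVec hM, hQ,
    mulVec_mulVec, mul_inv_of_invertible, one_mulVec, hCy, ← sub_sub]
  exact congrArg₂ (· + ·) (dotProduct_comm _ _) (dotProduct_comm _ _)

end Mahalanobis

theorem div_add_rpow_eq_mul_one_add_div_rpow_neg {P a δ : ℝ} (hP : 0 ≤ P) (ha : 0 < a)
    (hδ : 0 ≤ δ) (r : ℝ) :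
    (P / (a + δ)) ^ r = P ^ r / a ^ r * (1 + δ / a) ^ (-r) := by
  have hpos : 0 < 1 + δ / a := by positivity
  rw [show a + δ = a * (1 + δ / a) by field_simp, div_rpow hP (by positivity),
    mul_rpow ha.le hpos.le, rpow_neg hpos.le, div_mul_eq_div_div, div_eq_mul_inv _ (_ ^ r)]

theorem tPdf_div_smul {n : Type*} [Fintype n] [DecidableEq n] (μ : n → ℝ) {C : Matrix n n ℝ}
    (hC : 0 < C.det) {a k : ℝ} (ha : 0 < a) (hk : 0 < k) (x : n → ℝ) :
    tPdf μ ((a / k) • C) k x =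
      Real.Gamma ((Fintype.card n + k) / 2) /
          (Real.Gamma (k / 2) * π ^ ((Fintype.card n : ℝ) / 2)) *
        a ^ (-(Fintype.card n : ℝ) / 2) * C.det ^ (-(1 : ℝ) / 2) *
        (1 + mahalanobis μ C x / a) ^ (-((Fintype.card n + k) / 2)) := by
  have hscale : 1 + (a / k)⁻¹ * mahalanobis μ C x / k = 1 + mahalanobis μ C x / a := by
    field_simp
  have hdet : ((a / k) ^ Fintype.card n * C.det) ^ (-(1 : ℝ) / 2) =
      a ^ (-(Fintype.card n : ℝ) / 2) * k ^ ((Fintype.card n : ℝ) / 2) *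
        C.det ^ (-(1 : ℝ) / 2) := by
    rw [mul_rpow (by positivity) hC.le, ← rpow_natCast, ← rpow_mul (by positivity),
      div_rpow ha.le hk.le, show (Fintype.card n : ℝ) * (-1 / 2) = -(Fintype.card n / 2) by ring,
      rpow_neg hk.le, div_inv_eq_mul, ← neg_div]
  rw [tPdf, mahalanobis_smul μ (isUnit_iff_ne_zero.mpr hC.ne') (by positivity), det_smul, hscale,
    hdet]
  have : k ^ ((Fintype.card n : ℝ) / 2) ≠ 0 := by positivity
  field_simp

/-- pointwise identity underlying Proposition 4. -/
theorem tPdf_conditional_tilting {p1 p2 : ℕ} (ν r : ℝ) (hν : 0 < ν)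
    (hr : 0 < ν + (p1 : ℝ) + 2 * r)
    (μ1 : Fin p1 → ℝ) (μ2 : Fin p2 → ℝ)
    (S11 : Matrix (Fin p1) (Fin p1) ℝ) (S12 : Matrix (Fin p1) (Fin p2) ℝ)
    (S21 : Matrix (Fin p2) (Fin p1) ℝ) (S22 : Matrix (Fin p2) (Fin p2) ℝ)
    (hS : (Matrix.fromBlocks S11 S12 S21 S22).PosDef)
    (x1 : Fin p1 → ℝ) (x2 : Fin p2 → ℝ) :
    ((ν + ((p1 : ℝ) + (p2 : ℝ))) /
          (ν + mahalanobis (Sum.elim μ1 μ2) (Matrix.fromBlocks S11 S12 S21 S22)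
            (Sum.elim x1 x2))) ^ r *
        tPdf (μ2 + S21 *ᵥ (S11⁻¹ *ᵥ (x1 - μ1)))
          (((ν + mahalanobis μ1 S11 x1) / (ν + (p1 : ℝ))) • (S22 - S21 * S11⁻¹ * S12))
          (ν + (p1 : ℝ)) x2
      = ((ν + ((p1 : ℝ) + (p2 : ℝ))) ^ r *
            (Real.Gamma ((((p1 : ℝ) + (p2 : ℝ)) + ν) / 2) *
              Real.Gamma (((p1 : ℝ) + ν + 2 * r) / 2) /
              (Real.Gamma (((p1 : ℝ) + ν) / 2) *
                Real.Gamma ((((p1 : ℝ) + (p2 : ℝ)) + ν + 2 * r) / 2))) /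
          (ν + mahalanobis μ1 S11 x1) ^ r) *
        tPdf (μ2 + S21 *ᵥ (S11⁻¹ *ᵥ (x1 - μ1)))
          (((ν + mahalanobis μ1 S11 x1) / (ν + 2 * r + (p1 : ℝ))) • (S22 - S21 * S11⁻¹ * S12))
          (ν + (p1 : ℝ) + 2 * r) x2 := by
  have hA : S11.PosDef := hS.of_fromBlocks₁₁
  obtain rfl : S21 = S12ᴴ := hS.fromBlocks₂₁_eq_conjTranspose
  have := hA.isUnit.invertible
  have hC := hS.schur_complement₁₁
  have hδ₁ := mahalanobis_nonneg μ1 hA x1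
  have hδ₂ := mahalanobis_nonneg (μ2 + S12ᴴ *ᵥ (S11⁻¹ *ᵥ (x1 - μ1))) hC x2
  have ha : 0 < ν + mahalanobis μ1 S11 x1 := by positivity
  have hratio : Gamma ((p2 + (ν + p1)) / 2) / (Gamma ((ν + p1) / 2) * π ^ ((p2 : ℝ) / 2)) =
      Gamma ((p1 + p2 + ν) / 2) * Gamma ((p1 + ν + 2 * r) / 2) /
          (Gamma ((p1 + ν) / 2) * Gamma ((p1 + p2 + ν + 2 * r) / 2)) *
        (Gamma ((p2 + (ν + p1 + 2 * r)) / 2) /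
          (Gamma ((ν + p1 + 2 * r) / 2) * π ^ ((p2 : ℝ) / 2))) := by
    rw [show ((p1 : ℝ) + p2 + ν) / 2 = (p2 + (ν + p1)) / 2 by ring,
      show ((p1 : ℝ) + ν + 2 * r) / 2 = (ν + p1 + 2 * r) / 2 by ring,
      show ((p1 : ℝ) + ν) / 2 = (ν + p1) / 2 by ring,
      show ((p1 : ℝ) + p2 + ν + 2 * r) / 2 = (p2 + (ν + p1 + 2 * r)) / 2 by ring]
    field_simp
  rw [mahalanobis_fromBlocks S12 S22 hA.1 (isUnit_iff_ne_zero.mpr hC.det_pos.ne'),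
    ← add_assoc ν (mahalanobis μ1 S11 x1), show ν + 2 * r + (p1 : ℝ) = ν + p1 + 2 * r by ring,
    tPdf_div_smul _ hC.det_pos ha (by positivity), tPdf_div_smul _ hC.det_pos ha hr,
    div_add_rpow_eq_mul_one_add_div_rpow_neg (by positivity) ha hδ₂, Fintype.card_fin, hratio,
    show -(((p2 : ℝ) + (ν + p1 + 2 * r)) / 2) = -((p2 + (ν + p1)) / 2) + -r by ring,
    rpow_add (by positivity)]
  ring
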